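/- arXiv:1805.10891 — 3 statements merged into one kernel-verified Lean document; each statement's English description precedes it below -/
import Mathlib

section
/- If the verification conditions for r_w hold and some observation yields a nonempty verdict on a trace, then that trace violates φ and every member of the verdict can itself produce a violation with exactly those parties corrupted. -/
/-- Under the `r_w` verification conditions, a nonempty verdict on a trace means
the trace violates `φ`, and each member of the verdict can produce a violation
with exactly those parties corrupted (a subset of the actually corrupted ones). -/
theorem nonempty_verdict_violation {T A : Type*} [Finite A] (n : ℕ)
    (corrupted : T → Set A) (φ : T → Prop)
    (ω : Fin n → T → Prop) (V : Fin n → Set (Set A))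
    (XH : ∀ t, ∃ i, ω i t)
    (XC : ∀ t (i j : Fin n), ω i t → ω j t → i = j)
    (SF : ∀ i, ∀ S ∈ V i, ∃ t, ¬ φ t ∧ corrupted t = S)
    (Vf : ∀ i t, ω i t → (V i = ∅ ↔ φ t))
    (M : ∀ i, ∀ S ∈ V i, ∀ S', S' ⊂ S → ¬ ∃ t, ¬ φ t ∧ corrupted t = S')
    (U : ∀ i t, ω i t → ⋃₀ (V i) ⊆ corrupted t)
    (C : ∀ i, ∀ S ⊆ ⋃₀ (V i), (∃ j, V j = {S} ∧ ∃ t, ω j t) → S ∈ V i) :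
    ∀ (i : Fin n) (t : T), ω i t → V i ≠ ∅ →
      ¬ φ t ∧ ∀ S ∈ V i, ∃ t', corrupted t' = S ∧ ¬ φ t' ∧ corrupted t' ⊆ corrupted t := by
  intro i t hω hV
  refine ⟨fun hφ => hV ((Vf i t hω).mpr hφ), fun S hS => ?_⟩
  obtain ⟨t', hφ', hc⟩ := SF i S hS
  exact ⟨t', hc, hφ', hc ▸ fun a ha => U i t hω ⟨S, hS, ha⟩⟩
end

section
/- Under the verification conditions for r_w, if a trace t has ω i t with V i ≠ ∅, then every S ∈ V i is minimal among corruption sets of violating traces related to t by r_w; i.e., V i ⊆ apv(t). -/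
def apvW {T A : Type*} (corrupted : T → Set A) (φ : T → Prop) (t : T) : Set (Set A) :=
  {S | ¬ φ t ∧ (∃ t', corrupted t' ⊆ corrupted t ∧ ¬ φ t' ∧ corrupted t' = S) ∧
    ∀ t', corrupted t' ⊆ corrupted t → ¬ φ t' → corrupted t' ⊆ S → corrupted t' = S}

/-- Under the `r_w` verification conditions (SF, V, M, U), a nonempty verdict of
a matching case is contained in the a posteriori verdict. -/
theorem verdict_subset_apv {T A : Type*} [Finite A] (n : ℕ)
    (corrupted : T → Set A) (φ : T → Prop)
    (ω : Fin n → T → Prop) (V : Fin n → Set (Set A))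
    (SF : ∀ i, ∀ S ∈ V i, ∃ t, ¬ φ t ∧ corrupted t = S)
    (Vf : ∀ i t, ω i t → (V i = ∅ ↔ φ t))
    (M : ∀ i, ∀ S ∈ V i, ∀ S', S' ⊂ S → ¬ ∃ t, ¬ φ t ∧ corrupted t = S')
    (U : ∀ i t, ω i t → ⋃₀ (V i) ⊆ corrupted t) :
    ∀ (i : Fin n) (t : T), ω i t → V i ≠ ∅ → V i ⊆ apvW corrupted φ t := by
  intro i t hω hV S hS
  have hφ : ¬ φ t := fun h => hV ((Vf i t hω).mpr h)
  refine ⟨hφ, ?_, ?_⟩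
  · obtain ⟨t', ht'φ, ht'c⟩ := SF i S hS
    exact ⟨t', ht'c ▸ fun a ha => U i t hω ⟨S, hS, ha⟩, ht'φ, ht'c⟩
  · intro t' _ ht'φ hsub
    by_contra hne
    exact M i S hS (corrupted t') ⟨hsub, fun h => hne (subset_antisymm hsub h)⟩ ⟨t', ht'φ, rfl⟩
end

section
/- Under the r_w verification conditions, no case with a composite verdict (|V j| ≥ 2) can correspond to a minimal violating counterfactual: if ω j t' for a violating trace t' whose corruption set is minimal among violating traces related to some t, then V j is a singleton. -/
/-- Under the `r_w` verification conditions, a case matching a violating trace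
whose corruption set is minimal among violating counterfactuals of some trace `t`
must have a singleton verdict. -/
theorem minimal_case_singleton {T A : Type*} [Finite A] (n : ℕ)
    (corrupted : T → Set A) (φ : T → Prop)
    (ω : Fin n → T → Prop) (V : Fin n → Set (Set A))
    (SF : ∀ i, ∀ S ∈ V i, ∃ t, ¬ φ t ∧ corrupted t = S)
    (Vf : ∀ i t, ω i t → (V i = ∅ ↔ φ t))
    (M : ∀ i, ∀ S ∈ V i, ∀ S', S' ⊂ S → ¬ ∃ t, ¬ φ t ∧ corrupted t = S')
    (U : ∀ i t, ω i t → ⋃₀ (V i) ⊆ corrupted t)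
    (t t' : T) (j : Fin n)
    (hviol : ¬ φ t')
    (hcase : ω j t')
    (hsub : corrupted t' ⊆ corrupted t)
    (hmin : ∀ t'', corrupted t'' ⊆ corrupted t → ¬ φ t'' →
      ¬ corrupted t'' ⊂ corrupted t') :
    ∃ S : Set A, V j = {S} := by
  have hne : V j ≠ ∅ := fun h => hviol ((Vf j t' hcase).mp h)
  obtain ⟨S, hS⟩ := Set.nonempty_iff_ne_empty.mpr hne
  have key : ∀ S' ∈ V j, S' = corrupted t' := by
    intro S' hS'
    obtain ⟨t₀, ht₀, hc₀⟩ := SF j S' hS'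
    have hsub' : S' ⊆ corrupted t' := fun x hx =>
      U j t' hcase ⟨S', hS', hx⟩
    rcases hsub'.eq_or_ssubset with h | h
    · exact h
    · exact absurd (hc₀ ▸ h) (hmin t₀ (hc₀ ▸ hsub'.trans hsub) ht₀)
  exact ⟨corrupted t', Set.eq_singleton_iff_unique_mem.mpr ⟨key S hS ▸ hS, key⟩⟩
end
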